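/- For all n ≥ 0 and a in a field with (q^k a; q)_{n+1} ≠ 0 for 0 ≤ k ≤ n and (qa; q^2)_n ≠ 0, ∑_{k=0}^{n} q^{binom(k,2)} · qbinom(n,k) · (1 - q^{2k}a) / (q^k a; q)_{n+1} = (-1; q)_n / (qa; q^2)_n, where (x; p)_m = ∏_{j=0}^{m-1}(1 - p^j x). -/

import Mathlib

/-!
Wilf–Zeilberger method. Let `T n k` be the `k`-th summand, `S n` the sum and `W n k := wzCert q a n k`.
Then `T (n+1) k = (1 + q^n) / (1 - q^(2n+1) a) * T n k - W n k + W n (k-1)` (no last term at `k = 0`,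
and `T (n+1) (n+1) = W n n`), so summing over `k` telescopes to
`S (n+1) = (1 + q^n) / (1 - q^(2n+1) a) * S n`, the recursion of `(-1; q)_n / (qa; q^2)_n`.
Each case of the identity for `T` is a rational-function identity in `q`, `a`, `q^j`, `q^m` and a
few Pochhammer symbols.
-/

/-- The q-Pochhammer symbol `(x; p)_n = ∏_{j=0}^{n-1} (1 - p^j x)`. -/
def qPoch {F : Type*} [Field F] (q x : F) (n : ℕ) : F :=
  ∏ j ∈ Finset.range n, (1 - q ^ j * x)

open Finset

section Pochhammer

variable {F : Type*} [Field F]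

@[simp]
lemma qPoch_zero (q x : F) : qPoch q x 0 = 1 :=
  prod_range_zero _

lemma qPoch_succ (q x : F) (n : ℕ) :
    qPoch q x (n + 1) = qPoch q x n * (1 - q ^ n * x) :=
  prod_range_succ _ _

lemma qPoch_succ' (q x : F) (n : ℕ) :
    qPoch q x (n + 1) = (1 - x) * qPoch q (q * x) n := by
  rw [qPoch, prod_range_succ', pow_zero, one_mul, mul_comm, qPoch]
  congr 1
  exact prod_congr rfl fun i _ => by ring

lemma qPoch_pow_mul_succ (q x : F) (k n : ℕ) :
    qPoch q (q ^ k * x) (n + 1) = (1 - q ^ k * x) * qPoch q (q ^ (k + 1) * x) n := by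
  rw [qPoch_succ', ← mul_assoc, ← pow_succ']

lemma qPoch_ne_zero_of_le {q x : F} {m l : ℕ} (h : qPoch q x m ≠ 0) (hl : l ≤ m) :
    qPoch q x l ≠ 0 := by
  obtain ⟨r, rfl⟩ := Nat.exists_eq_add_of_le hl
  rw [qPoch, prod_range_add] at h
  exact left_ne_zero_of_mul h

lemma qPoch_self_ne_zero {q : F} (hq : ∀ m : ℕ, 1 ≤ m → q ^ m ≠ 1) (n : ℕ) :
    qPoch q q n ≠ 0 :=
  prod_ne_zero_iff.mpr fun i _ => by
    rw [← pow_succ]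
    exact sub_ne_zero_of_ne (hq (i + 1) i.succ_pos).symm

end Pochhammer

lemma Nat.choose_two_succ (n : ℕ) : (n + 1).choose 2 = n.choose 2 + n :=
  (Nat.choose_succ_succ' n 1).trans (by rw [Nat.choose_one_right, add_comm])

section WZ

variable {F : Type*} [Field F] {q a : F}

def qSummand (q a : F) (n k : ℕ) : F :=
  q ^ k.choose 2 * (qPoch q q n / (qPoch q q k * qPoch q q (n - k))) *
    ((1 - q ^ (2 * k) * a) / qPoch q (q ^ k * a) (n + 1))

def wzCert (q a : F) (n j : ℕ) : F :=
  q ^ j.choose 2 * (qPoch q q n / (qPoch q q j * qPoch q q (n - j))) *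
    (q ^ n * (1 - q ^ (2 * j + 1) * a) /
      ((1 - q ^ (2 * n + 1) * a) * qPoch q (q ^ (j + 1) * a) (n + 1)))

lemma qSummand_succ_zero (hq : ∀ m, qPoch q q m ≠ 0) {n : ℕ} (ha : qPoch q a (n + 1 + 1) ≠ 0)
    (hc : 1 - q ^ (2 * n + 1) * a ≠ 0) :
    qSummand q a (n + 1) 0
      = (1 + q ^ n) / (1 - q ^ (2 * n + 1) * a) * qSummand q a n 0 - wzCert q a n 0 := by
  simp only [qSummand, wzCert, Nat.choose_zero_succ, pow_zero, one_mul, mul_zero, Nat.sub_zero,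
    zero_add, pow_one, qPoch_zero, div_self (hq _)]
  rw [qPoch_succ' q a (n + 1), qPoch_succ' q a n, qPoch_succ q (q * a) n] at *
  obtain ⟨h1, h2, h3⟩ : 1 - a ≠ 0 ∧ qPoch q (q * a) n ≠ 0 ∧ 1 - q ^ n * (q * a) ≠ 0 := by
    simpa only [ne_eq, mul_eq_zero, not_or] using ha
  generalize hA : 1 - q ^ n * (q * a) = A at *
  generalize hD : 1 - q ^ (2 * n + 1) * a = D at *
  field_simp
  subst hA hD
  ring

lemma qSummand_succ_self (hq : ∀ m, qPoch q q m ≠ 0) {n : ℕ}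
    (ha : qPoch q (q ^ (n + 1) * a) (n + 1 + 1) ≠ 0) (hc : 1 - q ^ (2 * n + 1) * a ≠ 0) :
    qSummand q a (n + 1) (n + 1) = wzCert q a n n := by
  have e : q ^ (n + 1) * (q ^ (n + 1) * a) = q ^ (2 * (n + 1)) * a := by ring
  rw [qPoch_succ, e] at ha
  obtain ⟨h1, h2⟩ := mul_ne_zero_iff.mp ha
  simp only [qSummand, wzCert, Nat.sub_self, qPoch_zero, mul_one, div_self (hq _)]
  rw [qPoch_succ _ _ (n + 1), e, Nat.choose_two_succ]
  generalize hD : 1 - q ^ (2 * n + 1) * a = D at *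
  field_simp
  ring

lemma qSummand_succ_succ (hq : ∀ m, qPoch q q m ≠ 0) {n j : ℕ} (hj : j + 1 ≤ n)
    (ha : qPoch q (q ^ (j + 1) * a) (n + 1 + 1) ≠ 0) (hc : 1 - q ^ (2 * n + 1) * a ≠ 0) :
    qSummand q a (n + 1) (j + 1)
      = (1 + q ^ n) / (1 - q ^ (2 * n + 1) * a) * qSummand q a n (j + 1)
        - wzCert q a n (j + 1) + wzCert q a n j := by
  obtain ⟨m, rfl⟩ := Nat.exists_eq_add_of_le hj
  have hQ := (qPoch_pow_mul_succ q a (j + 1) (j + 1 + m + 1)).symm.trans (qPoch_succ _ _ _)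
  rw [qPoch_succ] at ha
  have hY : 1 - q ^ j * q ≠ 0 := right_ne_zero_of_mul (qPoch_succ q q j ▸ hq (j + 1))
  have hZ : 1 - q ^ m * q ≠ 0 := right_ne_zero_of_mul (qPoch_succ q q m ▸ hq (m + 1))
  have hFj := hq j
  have hFm := hq m
  have hFn := hq (j + 1 + m)
  simp only [qSummand, wzCert]
  rw [show j + 1 + m + 1 - (j + 1) = m + 1 by omega, show j + 1 + m - (j + 1) = m by omega,
    show j + 1 + m - j = m + 1 by omega, qPoch_succ q q (j + 1 + m), qPoch_succ q q m,
    qPoch_succ q q j, Nat.choose_two_succ, qPoch_succ _ _ (j + 1 + m + 1)]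
  -- `field_simp` only clears denominators it can see are nonzero; opaque atoms make that syntactic.
  generalize qPoch q (q ^ (j + 1) * a) (j + 1 + m + 1) = P at *
  generalize qPoch q (q ^ (j + 1 + 1) * a) (j + 1 + m + 1) = Q at *
  generalize hA : 1 - q ^ (j + 1) * a = A at *
  generalize hE : 1 - q ^ (j + 1 + m + 1) * (q ^ (j + 1) * a) = E at *
  generalize hD : 1 - q ^ (2 * (j + 1 + m) + 1) * a = D at *
  generalize hY' : 1 - q ^ j * q = Y at *
  generalize hZ' : 1 - q ^ m * q = Z at *
  obtain ⟨hP, hE0⟩ := mul_ne_zero_iff.mp ha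
  have hA0 : A ≠ 0 := left_ne_zero_of_mul (hQ ▸ ha)
  obtain rfl : Q = P * E / A := by
    rw [eq_div_iff hA0]
    linear_combination hQ
  field_simp
  subst hA hE hD hY' hZ'
  ring

lemma sum_qSummand_succ (hq : ∀ m, qPoch q q m ≠ 0) {n : ℕ}
    (ha : ∀ k ≤ n + 1, qPoch q (q ^ k * a) (n + 1 + 1) ≠ 0) (hc : 1 - q ^ (2 * n + 1) * a ≠ 0) :
    ∑ k ∈ range (n + 1 + 1), qSummand q a (n + 1) k
      = (1 + q ^ n) / (1 - q ^ (2 * n + 1) * a) * ∑ k ∈ range (n + 1), qSummand q a n k := by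
  have interior : ∀ j ∈ range n, qSummand q a (n + 1) (j + 1)
      = (1 + q ^ n) / (1 - q ^ (2 * n + 1) * a) * qSummand q a n (j + 1)
        + (wzCert q a n j - wzCert q a n (j + 1)) := fun j hj => by
    have hj := mem_range.mp hj
    rw [qSummand_succ_succ hq hj (ha (j + 1) (by omega)) hc]
    ring
  have h0 : qPoch q a (n + 1 + 1) ≠ 0 := by simpa using ha 0 (Nat.zero_le _)
  rw [sum_range_succ, sum_range_succ', sum_congr rfl interior, sum_add_distrib, sum_range_sub',
    ← mul_sum, qSummand_succ_zero hq h0 hc, qSummand_succ_self hq (ha (n + 1) le_rfl) hc,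
    sum_range_succ' (qSummand q a n)]
  ring

lemma sum_qSummand (hq : ∀ m, qPoch q q m ≠ 0) (n : ℕ)
    (ha : ∀ k ≤ n, qPoch q (q ^ k * a) (n + 1) ≠ 0) (ha2 : qPoch (q ^ 2) (q * a) n ≠ 0) :
    ∑ k ∈ range (n + 1), qSummand q a n k = qPoch q (-1) n / qPoch (q ^ 2) (q * a) n := by
  induction n with
  | zero => simpa [qSummand, qPoch] using ha 0 le_rfl
  | succ n ih =>
    have e : (q ^ 2) ^ n * (q * a) = q ^ (2 * n + 1) * a := by ring
    rw [qPoch_succ, e] at ha2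
    obtain ⟨ha2, hc⟩ := mul_ne_zero_iff.mp ha2
    rw [sum_qSummand_succ hq ha hc,
      ih (fun k hk => qPoch_ne_zero_of_le (ha k (by omega)) (n + 1).le_succ) ha2,
      qPoch_succ q (-1), qPoch_succ (q ^ 2), e]
    field_simp
    ring

end WZ

theorem stmt_19 {F : Type*} [Field F] (q a : F) (n : ℕ)
    (hq : ∀ m : ℕ, 1 ≤ m → q ^ m ≠ 1)
    (ha : ∀ k : ℕ, k ≤ n → qPoch q (q ^ k * a) (n + 1) ≠ 0)
    (ha2 : qPoch (q ^ 2) (q * a) n ≠ 0) :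
    ∑ k ∈ Finset.range (n + 1),
        q ^ k.choose 2 *
          (qPoch q q n / (qPoch q q k * qPoch q q (n - k))) *
          ((1 - q ^ (2 * k) * a) / qPoch q (q ^ k * a) (n + 1))
      = qPoch q (-1) n / qPoch (q ^ 2) (q * a) n :=
  sum_qSummand (qPoch_self_ne_zero hq) n ha ha2
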